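/- There exists ε ∈ (0, 1) such that for all real M > 0 and Q with |Q| ≤ εM, and for every r ∈ [r_P, r_*], one has (4/r³) · ∫_{r_P}^{r} s²/Υ(s) ds < 1/Υ(r). Equivalently, the function f(r) := (w_*/r²)·∫_{r_P}^{r} s²/Υ(s) ds satisfies f'(r) − (2/r)·f(r) > 0 for every r ∈ [r_P, r_*]. -/

import Mathlib

noncomputable section

/-- The Reissner–Nordström lapse function `Υ(r) = 1 - 2M/r + Q²/r²`. -/
def Upsilon (M Q r : ℝ) : ℝ := 1 - 2*M/r + Q^2/r^2

/-- The photon-sphere radius `r_P = (3M + √(9M² - 8Q²))/2`. -/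
def rP (M Q : ℝ) : ℝ := (3*M + Real.sqrt (9*M^2 - 8*Q^2)) / 2

/-- The radius `r_* = 2M + √(4M² - 3Q²)`. -/
def rstar (M Q : ℝ) : ℝ := 2*M + Real.sqrt (4*M^2 - 3*Q^2)

/-- The constant `w_* = (2/r_*)·Υ(r_*)`. -/
def wstar (M Q : ℝ) : ℝ := (2 / rstar M Q) * Upsilon M Q (rstar M Q)

/-- The Morawetz multiplier `f(r) = (w_*/r²)·∫_{r_P}^{r} s²/Υ(s) ds`. -/
def Ffun (M Q : ℝ) (r : ℝ) : ℝ :=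
  (wstar M Q / r^2) * ∫ s in (rP M Q)..r, s^2 / Upsilon M Q s

/-!
For `|Q| ≤ M/10` the radii satisfy `2.99 M ≤ r_P ≤ r ≤ r_* ≤ 4M`. On `[2.99 M, 4M]` the integrand
`s²/Υ(s) = s⁴/(s² - 2Ms + Q²) ≤ s³/(s - 2M)` lies below the line `5Ms + 61M²/5`, so the integral is
bounded by an explicit polynomial, and `Υ(r) ≤ (r² - 2Mr + M²/100)/r²` turns the claim into a
polynomial inequality in `r` and `M`. The second claim follows from the first, since
`f' - (2/r) f = w_* (1/Υ(r) - (4/r³) ∫_{r_P}^r s²/Υ(s) ds)`.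
-/

theorem Upsilon_eq_div (M Q : ℝ) {s : ℝ} (hs : s ≠ 0) :
    Upsilon M Q s = (s^2 - 2*M*s + Q^2) / s^2 := by
  unfold Upsilon
  field_simp

theorem Upsilon_pos {M Q s : ℝ} (hM : 0 ≤ M) (hs : 2*M < s) : 0 < Upsilon M Q s := by
  have hs0 : 0 < s := by linarith
  rw [Upsilon_eq_div M Q hs0.ne']
  exact div_pos (by nlinarith [sq_nonneg Q]) (by positivity)

theorem continuousOn_sq_div_Upsilon {M : ℝ} (Q : ℝ) (hM : 0 ≤ M) :
    ContinuousOn (fun s => s^2 / Upsilon M Q s) (Set.Ioi (2*M)) := by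
  have hne : ∀ s ∈ Set.Ioi (2*M), s ≠ 0 := fun s (hs : 2*M < s) => (show 0 < s by linarith).ne'
  have hU : ContinuousOn (Upsilon M Q) (Set.Ioi (2*M)) :=
    (continuousOn_const.sub (continuousOn_const.div continuousOn_id hne)).add
      (continuousOn_const.div (continuousOn_id.pow 2) fun s hs => pow_ne_zero 2 (hne s hs))
  exact (continuousOn_id.pow 2).div hU fun s hs => (Upsilon_pos hM hs).ne'

theorem sq_div_Upsilon_le {M s : ℝ} (Q : ℝ) (hM : 0 < M) (h₁ : 299/100*M ≤ s) (h₂ : s ≤ 4*M) :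
    s^2 / Upsilon M Q s ≤ 5*M*s + 61/5*M^2 := by
  have hx : 0 ≤ s - 299/100*M := by linarith
  have hy : 0 ≤ 4*M - s := by linarith
  have hD : 0 < s^2 - 2*M*s + Q^2 := by nlinarith [sq_nonneg Q]
  rw [Upsilon_eq_div M Q (show 0 < s by linarith).ne', div_div_eq_mul_div, div_le_iff₀ hD]
  nlinarith [mul_nonneg hx (pow_nonneg hM.le 3), mul_nonneg (mul_nonneg hx hy) (sq_nonneg M),
    mul_nonneg (mul_nonneg (mul_nonneg hx hx) hy) hM.le,
    mul_nonneg (mul_nonneg (mul_nonneg hx hx) hx) hy, pow_pos hM 4,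
    mul_nonneg (by nlinarith : 0 ≤ 5*M*s + 61/5*M^2) (sq_nonneg Q)]

theorem integral_sq_div_Upsilon_le {M a r : ℝ} (Q : ℝ) (hM : 0 < M) (ha : 299/100*M ≤ a)
    (har : a ≤ r) (hr : r ≤ 4*M) :
    ∫ s in a..r, s^2 / Upsilon M Q s ≤ 5*M*((r^2 - a^2)/2) + 61/5*M^2*(r - a) := by
  have hint : IntervalIntegrable (fun s => s^2 / Upsilon M Q s) MeasureTheory.volume a r := by
    refine ContinuousOn.intervalIntegrable ((continuousOn_sq_div_Upsilon Q hM.le).mono ?_)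
    rw [Set.uIcc_of_le har]
    exact fun s hs => Set.mem_Ioi.2 (by linarith [hs.1])
  calc ∫ s in a..r, s^2 / Upsilon M Q s
      ≤ ∫ s in a..r, (5*M*s + 61/5*M^2) :=
        intervalIntegral.integral_mono_on har hint
          ((by fun_prop : Continuous fun s : ℝ => 5*M*s + 61/5*M^2).intervalIntegrable _ _)
          fun s hs => sq_div_Upsilon_le Q hM (by linarith [hs.1]) (by linarith [hs.2])
    _ = 5*M*((r^2 - a^2)/2) + 61/5*M^2*(r - a) := by
        rw [intervalIntegral.integral_add (intervalIntegral.intervalIntegrable_id.const_mul _)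
          intervalIntegrable_const, intervalIntegral.integral_const_mul, integral_id,
          intervalIntegral.integral_const, smul_eq_mul, mul_comm (r - a)]

theorem majorant_mul_lt_pow_five {M r : ℝ} (hM : 0 < M) (h₁ : 299/100*M ≤ r) (h₂ : r ≤ 4*M) :
    (5*M*((r^2 - (299/100*M)^2)/2) + 61/5*M^2*(r - 299/100*M)) * (4*(r^2 - 2*M*r + M^2/100))
      < r^5 := by
  have hx : 0 ≤ r - 299/100*M := by linarith
  have hy : 0 ≤ 4*M - r := by linarith
  nlinarith [mul_nonneg hy (pow_nonneg hM.le 4),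
    mul_nonneg (mul_nonneg hx hy) (pow_nonneg hM.le 3),
    mul_nonneg (mul_nonneg (mul_nonneg hx hx) hy) (sq_nonneg M),
    mul_nonneg (pow_nonneg hx 4) hM.le, pow_nonneg hx 5, pow_pos hM 5]

theorem four_div_cube_mul_integral_lt {M Q a r : ℝ} (hM : 0 < M) (hQ : Q^2 ≤ M^2/100)
    (ha : 299/100*M ≤ a) (har : a ≤ r) (hr : r ≤ 4*M) :
    4 / r^3 * ∫ s in a..r, s^2 / Upsilon M Q s < 1 / Upsilon M Q r := by
  have hpoly := majorant_mul_lt_pow_five hM (ha.trans har) hr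
  set P := 5*M*((r^2 - (299/100*M)^2)/2) + 61/5*M^2*(r - 299/100*M) with hP_def
  have hr0 : 0 < r := by linarith
  have hD : 0 < r^2 - 2*M*r + Q^2 := by nlinarith [sq_nonneg Q]
  have hP : 0 ≤ P := by
    have : 0 ≤ r - 299/100*M := by linarith
    have : 0 ≤ r^2 - (299/100*M)^2 := by nlinarith
    positivity
  have hIP : ∫ s in a..r, s^2 / Upsilon M Q s ≤ P := by
    refine (integral_sq_div_Upsilon_le Q hM ha har hr).trans ?_
    nlinarith [hP_def, mul_nonneg hM.le (sub_nonneg.2 ha),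
      mul_nonneg (sq_nonneg M) (sub_nonneg.2 ha)]
  have hPD : P * (4*(r^2 - 2*M*r + Q^2)) < r^5 := by
    nlinarith [hpoly, mul_le_mul_of_nonneg_left hQ hP]
  rw [Upsilon_eq_div M Q hr0.ne', one_div_div, lt_div_iff₀ hD]
  calc 4 / r^3 * (∫ s in a..r, s^2 / Upsilon M Q s) * (r^2 - 2*M*r + Q^2)
      = (∫ s in a..r, s^2 / Upsilon M Q s) * (4*(r^2 - 2*M*r + Q^2)) / r^3 := by ring
    _ < r^5 / r^3 := by
        gcongr
        exact (mul_le_mul_of_nonneg_right hIP (by linarith)).trans_lt hPD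
    _ = r^2 := by field_simp

theorem le_rP {M Q : ℝ} (hQ : Q^2 ≤ M^2/100) : 299/100*M ≤ rP M Q := by
  have : 298/100*M ≤ Real.sqrt (9*M^2 - 8*Q^2) :=
    Real.le_sqrt_of_sq_le (by nlinarith)
  unfold rP
  linarith

theorem two_mul_lt_rP {M Q : ℝ} (hQ : Q^2 < M^2) : 2*M < rP M Q := by
  have : |M| < Real.sqrt (9*M^2 - 8*Q^2) :=
    Real.lt_sqrt_of_sq_lt (by rw [sq_abs]; linarith)
  unfold rP
  linarith [le_abs_self M]

theorem rstar_le (M Q : ℝ) (hM : 0 ≤ M) : rstar M Q ≤ 4*M := by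
  have : Real.sqrt (4*M^2 - 3*Q^2) ≤ 2*M :=
    Real.sqrt_le_iff.2 ⟨by linarith, by nlinarith [sq_nonneg Q]⟩
  unfold rstar
  linarith

theorem two_mul_lt_rstar {M Q : ℝ} (hQ : 3*Q^2 < 4*M^2) : 2*M < rstar M Q := by
  have : 0 < Real.sqrt (4*M^2 - 3*Q^2) := Real.sqrt_pos.2 (by linarith)
  unfold rstar
  linarith

theorem wstar_pos {M Q : ℝ} (hM : 0 ≤ M) (hQ : 3*Q^2 < 4*M^2) : 0 < wstar M Q := by
  have h := two_mul_lt_rstar hQ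
  exact mul_pos (div_pos two_pos (by linarith)) (Upsilon_pos hM h)

theorem deriv_Ffun_sub_two_div_mul_Ffun {M Q r : ℝ} (hM : 0 ≤ M) (hP : 2*M < rP M Q)
    (hr : 2*M < r) :
    deriv (Ffun M Q) r - 2 / r * Ffun M Q r
      = wstar M Q * (1 / Upsilon M Q r - 4 / r^3 * ∫ s in (rP M Q)..r, s^2 / Upsilon M Q s) := by
  have hr0 : r ≠ 0 := (show 0 < r by linarith).ne'
  have hcont := continuousOn_sq_div_Upsilon Q hM
  have hint : IntervalIntegrable (fun s => s^2 / Upsilon M Q s) MeasureTheory.volume (rP M Q) r :=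
    (hcont.mono (Set.ordConnected_Ioi.uIcc_subset hP hr)).intervalIntegrable
  have hI := intervalIntegral.integral_hasDerivAt_right hint
    (hcont.stronglyMeasurableAtFilter isOpen_Ioi r hr) (hcont.continuousAt (Ioi_mem_nhds hr))
  have hF : HasDerivAt (Ffun M Q) _ r :=
    ((hasDerivAt_const r (wstar M Q)).div (hasDerivAt_pow 2 r) (pow_ne_zero 2 hr0)).mul hI
  rw [hF.deriv, Ffun, Pi.div_apply]
  field_simp
  ring

theorem f_prime_minus_two_over_r_f_pos_small_charge :
    ∃ ε : ℝ, 0 < ε ∧ ε < 1 ∧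
      ∀ M Q : ℝ, 0 < M → |Q| ≤ ε * M →
        ∀ r : ℝ, rP M Q ≤ r → r ≤ rstar M Q →
          ((4 / r^3) * (∫ s in (rP M Q)..r, s^2 / Upsilon M Q s)
              < 1 / Upsilon M Q r) ∧
          0 < deriv (Ffun M Q) r - (2 / r) * Ffun M Q r := by
  refine ⟨1/10, by norm_num, by norm_num, fun M Q hM hQ r hPr hrs => ?_⟩
  have hQ2 : Q^2 ≤ M^2/100 := by nlinarith [sq_abs Q, abs_nonneg Q]
  have hP : 299/100*M ≤ rP M Q := le_rP hQ2
  have hlt := four_div_cube_mul_integral_lt hM hQ2 hP hPr (hrs.trans (rstar_le M Q hM.le))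
  refine ⟨hlt, ?_⟩
  rw [deriv_Ffun_sub_two_div_mul_Ffun hM.le (two_mul_lt_rP (by nlinarith)) (by linarith)]
  exact mul_pos (wstar_pos hM.le (by nlinarith)) (sub_pos.2 hlt)
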